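/- arXiv:1004.2697 — 2 statements merged into one kernel-verified Lean document; each statement's English description precedes it below -/
import Mathlib

section
/- Objectives imply fairness (originator side, abstract version): Let traces assign to each time n truth values of monotonic predicates EOO, σ_A^O, σ_A^T, EOR, σ_B^R, σ_B^T, AB_O. Define NRO n := EOO n ∧ (σ_A^O n ∨ σ_A^T n) and NRR n := EOR n ∧ (σ_B^R n ∨ σ_B^T n). Assume: (H1) φ_O: ∃ N, ∀ n ≥ N, (σ_B^R n ∨ (σ_B^T n ∧ ¬ AB_O n)) ∨ (AB_O n ∧ ¬ σ_A^O n ∧ ¬ σ_A^T n); (H2) if ∃ n, σ_A^O n then ∃ n, EOR n (message m2 must precede sending the signature); (H3) if ∃ n, σ_A^T n then (∃ n, σ_B^T n) ∧ (∃ n, EOR n) (the TTP resolves symmetrically and delivery sets EOR). Then fairness for O holds: ∀ n, NRO n → ∃ m, NRR m. -/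
private lemma mono_le {p : ℕ → Prop} (h : ∀ n, p n → p (n + 1)) :
    ∀ {m n : ℕ}, m ≤ n → p m → p n := by
  intro m n hmn hp
  induction hmn with
  | refl => exact hp
  | step _ ih => exact h _ ih

/-- Objectives imply fairness (originator side, abstract version). -/
theorem objectives_imply_fairness_O
    (EOO sigAO sigAT EOR sigBR sigBT ABO : ℕ → Prop)
    (hEOO : ∀ n, EOO n → EOO (n + 1))
    (hsigAO : ∀ n, sigAO n → sigAO (n + 1))
    (hsigAT : ∀ n, sigAT n → sigAT (n + 1))
    (hEOR : ∀ n, EOR n → EOR (n + 1))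
    (hsigBR : ∀ n, sigBR n → sigBR (n + 1))
    (hsigBT : ∀ n, sigBT n → sigBT (n + 1))
    (hABO : ∀ n, ABO n → ABO (n + 1))
    (H1 : ∃ N, ∀ n ≥ N,
      (sigBR n ∨ (sigBT n ∧ ¬ ABO n)) ∨ (ABO n ∧ ¬ sigAO n ∧ ¬ sigAT n))
    (H2 : (∃ n, sigAO n) → ∃ n, EOR n)
    (H3 : (∃ n, sigAT n) → (∃ n, sigBT n) ∧ (∃ n, EOR n)) :
    ∀ n, (EOO n ∧ (sigAO n ∨ sigAT n)) →
      ∃ m, EOR m ∧ (sigBR m ∨ sigBT m) := by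
  intro n ⟨_, hsig⟩
  obtain ⟨N, hN⟩ := H1
  -- get EOR somewhere
  obtain ⟨k, hk⟩ : ∃ k, EOR k := by
    cases hsig with
    | inl h => exact H2 ⟨n, h⟩
    | inr h => exact (H3 ⟨n, h⟩).2
  -- at time max N n, signature still holds
  set m := max N n
  have hsm : sigAO m ∨ sigAT m := by
    cases hsig with
    | inl h => exact Or.inl (mono_le hsigAO (le_max_right N n) h)
    | inr h => exact Or.inr (mono_le hsigAT (le_max_right N n) h)
  have hB : sigBR m ∨ sigBT m := by
    rcases hN m (le_max_left N n) with (h | ⟨hb, _⟩) | ⟨_, hO, hT⟩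
    · exact Or.inl h
    · exact Or.inr hb
    · cases hsm with
      | inl h => exact absurd h hO
      | inr h => exact absurd h hT
  refine ⟨max m k, mono_le hEOR (le_max_right m k) hk, ?_⟩
  cases hB with
  | inl h => exact Or.inl (mono_le hsigBR (le_max_left m k) h)
  | inr h => exact Or.inr (mono_le hsigBT (le_max_left m k) h)
end

section
/- Case 1 of the fairness proof: for monotonic predicates, if (i) ◇□σ_A^O holds, (ii) ◇σ_A^O → ◇EOR (O sends her signature only after receiving m2), and (iii) the violation formula ◇□(EOO ∧ (σ_A^O ∨ σ_A^T) ∧ (¬EOR ∨ (¬σ_B^R ∧ ¬σ_B^T))) holds, then the originator objective disjunct φ_O^2 = ◇□(σ_B^R ∨ (σ_B^T ∧ ¬AB_O)) fails and φ_O^3 = ◇□(AB_O ∧ ¬σ_A^O ∧ ¬σ_A^T) fails. Hence φ_O^2 ∨ φ_O^3 is false. -/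
/-- Case 1 of the fairness proof: under `◇□σ_A^O`, message-ordering, and the
violation formula, both disjuncts of the originator objective fail. -/
theorem case1_objective_fails
    (EOO sigAO sigAT EOR sigBR sigBT ABO : ℕ → Prop)
    (hEOO : ∀ n, EOO n → EOO (n + 1))
    (hsigAO : ∀ n, sigAO n → sigAO (n + 1))
    (hsigAT : ∀ n, sigAT n → sigAT (n + 1))
    (hEOR : ∀ n, EOR n → EOR (n + 1))
    (hsigBR : ∀ n, sigBR n → sigBR (n + 1))
    (hsigBT : ∀ n, sigBT n → sigBT (n + 1))
    (hABO : ∀ n, ABO n → ABO (n + 1))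
    (h1 : ∃ N, ∀ n ≥ N, sigAO n)
    (h2 : (∃ n, sigAO n) → ∃ n, EOR n)
    (h3 : ∃ N, ∀ n ≥ N,
      EOO n ∧ (sigAO n ∨ sigAT n) ∧ (¬ EOR n ∨ (¬ sigBR n ∧ ¬ sigBT n))) :
    ¬ ((∃ N, ∀ n ≥ N, sigBR n ∨ (sigBT n ∧ ¬ ABO n)) ∨
       (∃ N, ∀ n ≥ N, ABO n ∧ ¬ sigAO n ∧ ¬ sigAT n)) := by
  obtain ⟨N1, hN1⟩ := h1
  obtain ⟨N3, hN3⟩ := h3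
  obtain ⟨n0, hn0⟩ := h2 ⟨N1, hN1 N1 le_rfl⟩
  have hEORmono : ∀ n ≥ n0, EOR n := by
    intro n hn
    induction n, hn using Nat.le_induction with
    | base => exact hn0
    | succ n _ ih => exact hEOR n ih
  rintro (⟨N2, hN2⟩ | ⟨N2, hN2⟩)
  · set M := max N3 (max N2 n0) with hM
    have h3' := hN3 M (le_max_left _ _)
    have h2' := hN2 M (le_trans (le_max_left _ _) (le_max_right _ _))
    have hE := hEORmono M (le_trans (le_max_right _ _) (le_max_right _ _))
    rcases h3'.2.2 with h | h
    · exact h hE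
    · rcases h2' with h' | h'
      · exact h.1 h'
      · exact h.2 h'.1
  · have h' := hN2 (max N1 N2) (le_max_right _ _)
    exact h'.2.1 (hN1 _ (le_max_left _ _))
end
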